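/- arXiv:2506.10492 — 2 statements merged into one kernel-verified Lean document; each statement's English description precedes it below -/
import Mathlib

section
/- Let (G,σ,w) be a positive-connected signed graph on n vertices whose underlying graph G is not complete, and let ε₀ be its consensus index. For every ε < ε₀, the second smallest eigenvalue λ₂^(ε) of the ε-repelling Laplacian L_ε = L₊ − εL₋ satisfies λ₂^(ε) ≤ max_{x∈V} (d_x⁺ − ε·d_x⁻). -/
open Matrix BigOperators

open scoped Classical

/-- Moore–Penrose pseudoinverse of a square real matrix (chosen via the
defining Penrose equations; it is unique when it exists). -/
noncomputable def pinv {n : ℕ} (A : Matrix (Fin n) (Fin n) ℝ) : Matrix (Fin n) (Fin n) ℝ :=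
  if h : ∃ B : Matrix (Fin n) (Fin n) ℝ,
      A * B * A = A ∧ B * A * B = B ∧ (A * B)ᵀ = A * B ∧ (B * A)ᵀ = B * A
  then h.choose else 0

/-- The eigenvalues of a symmetric real matrix, sorted in nondecreasing order. -/
noncomputable def sortedEigs {n : ℕ} (A : Matrix (Fin n) (Fin n) ℝ) : List ℝ :=
  if h : A.IsHermitian then (Finset.univ.val.map h.eigenvalues).sort (· ≤ ·) else []

/-- The second smallest eigenvalue (with multiplicity) of a symmetric real matrix. -/
noncomputable def secondSmallestEig {n : ℕ} (A : Matrix (Fin n) (Fin n) ℝ) : ℝ :=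
  (sortedEigs A).getD 1 0

/-- The largest eigenvalue of a symmetric real matrix. -/
noncomputable def largestEig {n : ℕ} (A : Matrix (Fin n) (Fin n) ℝ) : ℝ :=
  (sortedEigs A).getD (n - 1) 0

/-- A signed weighted graph on `n` vertices, given by the positive-part and
negative-part weight functions (an edge carries a positive weight and a sign;
`wplus i j > 0` iff `(i,j)` is a positive edge, `wminus i j > 0` iff it is a
negative edge). -/
structure SignedGraph (n : ℕ) where
  wplus : Fin n → Fin n → ℝ
  wminus : Fin n → Fin n → ℝ
  wplus_symm : ∀ i j, wplus i j = wplus j i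
  wminus_symm : ∀ i j, wminus i j = wminus j i
  wplus_nonneg : ∀ i j, 0 ≤ wplus i j
  wminus_nonneg : ∀ i j, 0 ≤ wminus i j
  wplus_diag : ∀ i, wplus i i = 0
  wminus_diag : ∀ i, wminus i i = 0
  disjoint : ∀ i j, wplus i j = 0 ∨ wminus i j = 0

namespace SignedGraph

variable {n : ℕ} (Γ : SignedGraph n)

/-- positive degree -/
noncomputable def dplus (i : Fin n) : ℝ := ∑ j, Γ.wplus i j

/-- negative degree -/
noncomputable def dminus (i : Fin n) : ℝ := ∑ j, Γ.wminus i j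

/-- Laplacian of the positive subgraph -/
noncomputable def Lplus : Matrix (Fin n) (Fin n) ℝ :=
  Matrix.of fun i j => if i = j then Γ.dplus i else -Γ.wplus i j

/-- Laplacian of the negative subgraph -/
noncomputable def Lminus : Matrix (Fin n) (Fin n) ℝ :=
  Matrix.of fun i j => if i = j then Γ.dminus i else -Γ.wminus i j

/-- the ε-repelling Laplacian `L₊ - ε L₋` -/
noncomputable def Leps (ε : ℝ) : Matrix (Fin n) (Fin n) ℝ := Γ.Lplus - ε • Γ.Lminus

/-- the positive subgraph as a simple graph -/
def posGraph : SimpleGraph (Fin n) := SimpleGraph.fromRel (fun i j => 0 < Γ.wplus i j)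

/-- the negative subgraph as a simple graph -/
def negGraph : SimpleGraph (Fin n) := SimpleGraph.fromRel (fun i j => 0 < Γ.wminus i j)

/-- the underlying simple graph -/
def underlying : SimpleGraph (Fin n) :=
  SimpleGraph.fromRel (fun i j => 0 < Γ.wplus i j + Γ.wminus i j)

/-- the signed graph is positive-connected -/
def PosConnected : Prop := Γ.posGraph.Connected

/-- the signed graph is negative-connected -/
def NegConnected : Prop := Γ.negGraph.Connected

/-- the consensus index ε₀ -/
noncomputable def consensusIndex : ℝ :=
  sSup {ε : ℝ | 0 < ε ∧ (Γ.Leps ε).PosSemidef ∧ (Γ.Leps ε).rank = n - 1}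

/-- the ε-repelling cost Ω_ε(i,j) = (e_i - e_j)ᵀ L_ε† (e_i - e_j) -/
noncomputable def cost (ε : ℝ) (i j : Fin n) : ℝ :=
  (Pi.single i 1 - Pi.single j 1) ⬝ᵥ (pinv (Γ.Leps ε)) *ᵥ (Pi.single i 1 - Pi.single j 1)

/-- the ε-repelling matrix Ω_ε -/
noncomputable def costMatrix (ε : ℝ) : Matrix (Fin n) (Fin n) ℝ :=
  Matrix.of fun i j => Γ.cost ε i j

/-- the node ε-repelling curvature, the unique solution of Ω_ε τ_ε = n·1 -/
noncomputable def tau (ε : ℝ) : Fin n → ℝ :=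
  (Γ.costMatrix ε)⁻¹ *ᵥ (fun _ => (n : ℝ))

/-- φ_ε = n · 1ᵀ Ω_ε⁻¹ 1 -/
noncomputable def phi (ε : ℝ) : ℝ :=
  (n : ℝ) * ((fun _ => (1 : ℝ)) ⬝ᵥ ((Γ.costMatrix ε)⁻¹ *ᵥ fun _ => (1 : ℝ)))

/-- the quantity Λ_ε(i,j) appearing in the edge ε-repelling curvature -/
noncomputable def Lam (ε : ℝ) (i j : Fin n) : ℝ :=
  (Γ.dminus i + Γ.dminus j)
    - (∑ k, Γ.cost ε j k * Γ.wminus i k + ∑ k, Γ.cost ε i k * Γ.wminus j k) / Γ.cost ε i j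

/-- the edge ε-repelling curvature ϑ_ε(i,j) -/
noncomputable def edgeCurv (ε : ℝ) (i j : Fin n) : ℝ :=
  2 * (Γ.tau ε i + Γ.tau ε j) / Γ.cost ε i j + (1 + ε) * Γ.Lam ε i j

end SignedGraph

/-
Pick two distinct non-adjacent vertices `x, y` and the test vector `v = e_x - e_y`. It is orthogonal
to the all-ones vector `1`, which lies in the kernel of `L_ε`, and since `L_ε x y = 0` its quadratic
form is `L_ε x x + L_ε y y`, the sum of the two values `d⁺ - ε d⁻` at `x` and `y`. For `ε < ε₀`
the matrix `L_ε` is positive semidefinite, and then the Courant–Fischer principle on the plane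
spanned by `1` and `v` gives `2 λ₂ ≤ vᵀ L_ε v`.
-/

lemma List.Pairwise.countP_le_one_of_lt_getD_one {l : List ℝ} (hl : l.Pairwise (· ≤ ·)) {m : ℝ}
    (hm : m < l.getD 1 0) : l.countP (· ≤ m) ≤ 1 := by
  match l, hl, hm with
  | [], _, _ => simp
  | [_], _, _ => exact List.countP_le_length
  | a :: b :: t, hl, hm =>
    have hbt : ∀ x ∈ b :: t, m < x := by
      rintro x (_ | ⟨_, hx⟩)
      · exact hm
      · exact hm.trans_le ((List.pairwise_cons.1 hl.of_cons).1 x hx)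
    rw [List.countP_cons, List.countP_eq_zero.2 (by simpa using hbt)]
    split <;> simp

lemma Multiset.getD_one_sort_map_univ_le_max {ι : Type*} [Fintype ι] (f : ι → ℝ) {i j : ι}
    (hij : i ≠ j) : ((Finset.univ.val.map f).sort (· ≤ ·)).getD 1 0 ≤ max (f i) (f j) := by
  classical
  set m := max (f i) (f j)
  by_contra! hm
  have hpair : ({i, j} : Finset ι) ⊆ Finset.univ.filter (f · ≤ m) := by
    simp [Finset.insert_subset_iff, m]
  have hcount := (Multiset.pairwise_sort _ _).countP_le_one_of_lt_getD_one hm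
  rw [← Multiset.coe_countP, Multiset.sort_eq, Multiset.countP_map, ← Finset.filter_val,
    ← Finset.card_def] at hcount
  have := Finset.card_le_card hpair
  rw [Finset.card_pair hij] at this
  omega

lemma dotProduct_self_nonneg {ι R : Type*} [Fintype ι] [Ring R] [LinearOrder R]
    [IsStrictOrderedRing R] (v : ι → R) : 0 ≤ v ⬝ᵥ v :=
  Fintype.sum_nonneg fun i => mul_self_nonneg (v i)

section Spectral

variable {n : ℕ} {A : Matrix (Fin n) (Fin n) ℝ}

lemma secondSmallestEig_le_max (hA : A.IsHermitian) {i j : Fin n} (hij : i ≠ j) :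
    secondSmallestEig A ≤ max (hA.eigenvalues i) (hA.eigenvalues j) := by
  rw [secondSmallestEig, sortedEigs, dif_pos hA]
  exact Multiset.getD_one_sort_map_univ_le_max _ hij

lemma Matrix.IsHermitian.dotProduct_mulVec_comm (hA : A.IsHermitian) (u v : Fin n → ℝ) :
    u ⬝ᵥ (A *ᵥ v) = (A *ᵥ u) ⬝ᵥ v := by
  rw [dotProduct_mulVec, ← mulVec_transpose, (isHermitian_iff_isSymm.1 hA).eq]

lemma Matrix.IsHermitian.dotProduct_eq_sum_eigenvectorBasis (hA : A.IsHermitian) (u w : Fin n → ℝ) :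
    u ⬝ᵥ w = ∑ k, (u ⬝ᵥ hA.eigenvectorBasis k) * (hA.eigenvectorBasis k ⬝ᵥ w) := by
  have := hA.eigenvectorBasis.sum_inner_mul_inner (WithLp.toLp 2 w) (WithLp.toLp 2 u)
  simp only [EuclideanSpace.inner_eq_star_dotProduct, star_trivial] at this
  simp only [← this, mul_comm]

lemma Matrix.IsHermitian.dotProduct_mulVec_eq_sum_eigenvalues (hA : A.IsHermitian) (v : Fin n → ℝ) :
    v ⬝ᵥ (A *ᵥ v) = ∑ k, hA.eigenvalues k * (v ⬝ᵥ hA.eigenvectorBasis k) ^ 2 := by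
  rw [hA.dotProduct_eq_sum_eigenvectorBasis]
  refine Finset.sum_congr rfl fun k _ => ?_
  rw [hA.dotProduct_mulVec_comm, hA.mulVec_eigenvectorBasis, smul_dotProduct, smul_eq_mul,
    dotProduct_comm]
  ring

lemma secondSmallestEig_mul_le_of_dotProduct_eigenvectorBasis_eq_zero (hA : A.IsHermitian)
    {i₀ : Fin n} (hmin : ∀ j, hA.eigenvalues i₀ ≤ hA.eigenvalues j) {v : Fin n → ℝ}
    (hv : v ⬝ᵥ hA.eigenvectorBasis i₀ = 0) :
    secondSmallestEig A * (v ⬝ᵥ v) ≤ v ⬝ᵥ (A *ᵥ v) := by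
  rw [hA.dotProduct_mulVec_eq_sum_eigenvalues, hA.dotProduct_eq_sum_eigenvectorBasis v v,
    Finset.mul_sum]
  refine Finset.sum_le_sum fun k _ => ?_
  rw [dotProduct_comm (hA.eigenvectorBasis k).ofLp, ← sq]
  obtain rfl | hk := eq_or_ne k i₀
  · simp [hv]
  · gcongr
    exact (secondSmallestEig_le_max hA hk).trans (max_le le_rfl (hmin k))

lemma secondSmallestEig_mul_le_of_mulVec_eq_zero (hA : A.IsHermitian) {u v : Fin n → ℝ}
    (hu : A *ᵥ u = 0) (hu₀ : u ≠ 0) (huv : u ⬝ᵥ v = 0) (hv : 0 ≤ v ⬝ᵥ (A *ᵥ v)) :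
    secondSmallestEig A * (v ⬝ᵥ v) ≤ v ⬝ᵥ (A *ᵥ v) := by
  set μ := secondSmallestEig A
  have : Nonempty (Fin n) := by
    obtain ⟨i, -⟩ := Function.ne_iff.1 hu₀
    exact ⟨i⟩
  obtain ⟨i₀, hmin⟩ := Finite.exists_min hA.eigenvalues
  set b : Fin n → ℝ := (hA.eigenvectorBasis i₀).ofLp
  rcases le_or_gt μ 0 with hμ | hμ
  · exact (mul_nonpos_of_nonpos_of_nonneg hμ (dotProduct_self_nonneg v)).trans hv
  have huu : 0 < u ⬝ᵥ u :=
    (dotProduct_self_nonneg u).lt_of_ne' (dotProduct_self_eq_zero.not.2 hu₀)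
  have hβ : u ⬝ᵥ b ≠ 0 := fun hβ => by
    have := secondSmallestEig_mul_le_of_dotProduct_eigenvectorBasis_eq_zero hA hmin hβ
    rw [hu, dotProduct_zero] at this
    nlinarith
  set w := (u ⬝ᵥ b) • v - (v ⬝ᵥ b) • u
  have hwb : w ⬝ᵥ b = 0 := by
    simp only [w, sub_dotProduct, smul_dotProduct, smul_eq_mul]
    ring
  have hww : w ⬝ᵥ w = (u ⬝ᵥ b) ^ 2 * (v ⬝ᵥ v) + (v ⬝ᵥ b) ^ 2 * (u ⬝ᵥ u) := by
    simp only [w, sub_dotProduct, dotProduct_sub, smul_dotProduct, dotProduct_smul, smul_eq_mul,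
      dotProduct_comm v u, huv]
    ring
  have hwAw : w ⬝ᵥ (A *ᵥ w) = (u ⬝ᵥ b) ^ 2 * (v ⬝ᵥ (A *ᵥ v)) := by
    have huAv : u ⬝ᵥ (A *ᵥ v) = 0 := by rw [hA.dotProduct_mulVec_comm, hu, zero_dotProduct]
    simp only [w, mulVec_sub, mulVec_smul, hu, smul_zero, sub_zero, dotProduct_smul,
      sub_dotProduct, smul_dotProduct, smul_eq_mul, huAv]
    ring
  have key := secondSmallestEig_mul_le_of_dotProduct_eigenvectorBasis_eq_zero hA hmin hwb
  rw [hww, hwAw] at key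
  have hβ2 : 0 < (u ⬝ᵥ b) ^ 2 := by positivity
  nlinarith [sq_nonneg (v ⬝ᵥ b), mul_nonneg (sq_nonneg (v ⬝ᵥ b)) huu.le]

end Spectral

section WeightedLaplacian

variable {ι : Type*} [Fintype ι] [DecidableEq ι] {w : ι → ι → ℝ}

def weightedLaplacian (w : ι → ι → ℝ) : Matrix ι ι ℝ :=
  diagonal (fun i => ∑ j, w i j) - Matrix.of w

lemma weightedLaplacian_mulVec (w : ι → ι → ℝ) (v : ι → ℝ) (i : ι) :
    (weightedLaplacian w *ᵥ v) i = ∑ j, w i j * (v i - v j) := by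
  rw [weightedLaplacian, sub_mulVec, Pi.sub_apply, mulVec_diagonal]
  simp only [mulVec, dotProduct, Matrix.of_apply, mul_sub, Finset.sum_sub_distrib, Finset.sum_mul]

lemma weightedLaplacian_mulVec_one (w : ι → ι → ℝ) : weightedLaplacian w *ᵥ 1 = 0 := by
  ext i
  simp [weightedLaplacian_mulVec]

lemma isSymm_weightedLaplacian (hsymm : ∀ i j, w i j = w j i) : (weightedLaplacian w).IsSymm :=
  (isSymm_diagonal _).sub (IsSymm.ext fun i j => hsymm j i)

lemma dotProduct_weightedLaplacian_mulVec (hsymm : ∀ i j, w i j = w j i) (v : ι → ℝ) :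
    v ⬝ᵥ (weightedLaplacian w *ᵥ v) = (∑ i, ∑ j, w i j * (v i - v j) ^ 2) / 2 := by
  have hswap : ∑ i, ∑ j, w i j * (v i * (v i - v j)) = ∑ i, ∑ j, w i j * (v j * (v j - v i)) := by
    rw [Finset.sum_comm]
    exact Finset.sum_congr rfl fun i _ => Finset.sum_congr rfl fun j _ => by rw [hsymm]
  have hsplit : ∑ i, ∑ j, w i j * (v i - v j) ^ 2 = ∑ i, ∑ j, w i j * (v i * (v i - v j))
      + ∑ i, ∑ j, w i j * (v j * (v j - v i)) := by
    simp only [← Finset.sum_add_distrib]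
    exact Finset.sum_congr rfl fun i _ => Finset.sum_congr rfl fun j _ => by ring
  simp only [dotProduct, weightedLaplacian_mulVec, Finset.mul_sum]
  rw [hsplit, ← hswap]
  simp only [mul_left_comm (v _)]
  ring

lemma posSemidef_weightedLaplacian (hsymm : ∀ i j, w i j = w j i) (hnonneg : ∀ i j, 0 ≤ w i j) :
    (weightedLaplacian w).PosSemidef := by
  refine .of_dotProduct_mulVec_nonneg (isHermitian_iff_isSymm.2 (isSymm_weightedLaplacian hsymm))
    fun v => ?_
  rw [star_trivial, dotProduct_weightedLaplacian_mulVec hsymm]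
  exact div_nonneg (Finset.sum_nonneg fun i _ => Finset.sum_nonneg fun j _ =>
    mul_nonneg (hnonneg i j) (sq_nonneg _)) zero_le_two

end WeightedLaplacian

lemma single_sub_single_dotProduct_mulVec {ι R : Type*} [Fintype ι] [DecidableEq ι] [CommRing R]
    (A : Matrix ι ι R) (x y : ι) :
    (Pi.single x 1 - Pi.single y 1) ⬝ᵥ (A *ᵥ (Pi.single x 1 - Pi.single y 1))
      = A x x - A x y - A y x + A y y := by
  simp [mulVec_sub, sub_dotProduct, dotProduct_sub]
  ring

namespace SignedGraph

variable {n : ℕ} (Γ : SignedGraph n)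

lemma Lplus_eq_weightedLaplacian : Γ.Lplus = weightedLaplacian Γ.wplus := by
  ext i j
  obtain rfl | hij := eq_or_ne i j <;> simp [Lplus, weightedLaplacian, dplus, wplus_diag, *]

lemma Lminus_eq_weightedLaplacian : Γ.Lminus = weightedLaplacian Γ.wminus := by
  ext i j
  obtain rfl | hij := eq_or_ne i j <;> simp [Lminus, weightedLaplacian, dminus, wminus_diag, *]

lemma posSemidef_Lplus : Γ.Lplus.PosSemidef :=
  Γ.Lplus_eq_weightedLaplacian ▸ posSemidef_weightedLaplacian Γ.wplus_symm Γ.wplus_nonneg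

lemma posSemidef_Lminus : Γ.Lminus.PosSemidef :=
  Γ.Lminus_eq_weightedLaplacian ▸ posSemidef_weightedLaplacian Γ.wminus_symm Γ.wminus_nonneg

lemma Leps_mulVec_one (ε : ℝ) : Γ.Leps ε *ᵥ 1 = 0 := by
  simp [Leps, sub_mulVec, smul_mulVec, Lplus_eq_weightedLaplacian, Lminus_eq_weightedLaplacian,
    weightedLaplacian_mulVec_one]

lemma Leps_apply_self (ε : ℝ) (i : Fin n) : Γ.Leps ε i i = Γ.dplus i - ε * Γ.dminus i := by
  simp [Leps, Lplus, Lminus]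

lemma Leps_apply_of_not_adj (ε : ℝ) {i j : Fin n} (hij : i ≠ j) (h : ¬ Γ.underlying.Adj i j) :
    Γ.Leps ε i j = 0 := by
  have hsum : Γ.wplus i j + Γ.wminus i j ≤ 0 := by
    simp only [underlying, SimpleGraph.fromRel_adj, ne_eq, hij, not_false_eq_true, true_and,
      not_or, not_lt] at h
    exact h.1
  have hplus : Γ.wplus i j = 0 := by linarith [Γ.wplus_nonneg i j, Γ.wminus_nonneg i j]
  have hminus : Γ.wminus i j = 0 := by linarith [Γ.wplus_nonneg i j, Γ.wminus_nonneg i j]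
  simp [Leps, Lplus, Lminus, hij, hplus, hminus]

lemma Leps_eq_add_smul_Lminus (ε ε' : ℝ) : Γ.Leps ε = Γ.Leps ε' + (ε' - ε) • Γ.Lminus := by
  simp only [Leps, sub_smul]
  abel

lemma posSemidef_Leps_of_lt_consensusIndex {ε : ℝ} (hε : ε < Γ.consensusIndex) :
    (Γ.Leps ε).PosSemidef := by
  set S := {ε : ℝ | 0 < ε ∧ (Γ.Leps ε).PosSemidef ∧ (Γ.Leps ε).rank = n - 1}
  by_cases hS : ∃ ε' ∈ S, ε < ε'
  · obtain ⟨ε', ⟨-, hε', -⟩, hlt⟩ := hS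
    rw [Γ.Leps_eq_add_smul_Lminus ε ε']
    exact hε'.add (Γ.posSemidef_Lminus.smul (sub_nonneg.2 hlt.le))
  -- otherwise `ε₀` is `sSup ∅ = 0` or a supremum bounded by `ε`, so `ε < 0`
  have hneg : ε < 0 := by
    push Not at hS
    rcases S.eq_empty_or_nonempty with hempty | hne
    · simpa [consensusIndex, S, hempty] using hε
    · exact absurd (csSup_le hne hS) hε.not_ge
  rw [Γ.Leps_eq_add_smul_Lminus ε 0, Leps, zero_smul, sub_zero]
  exact Γ.posSemidef_Lplus.add (Γ.posSemidef_Lminus.smul (by linarith))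

end SignedGraph

theorem stmt0_general {n : ℕ} (Γ : SignedGraph n)
    (hnoncomplete : ∃ x y : Fin n, x ≠ y ∧ ¬ Γ.underlying.Adj x y)
    (ε : ℝ) (hε : ε < Γ.consensusIndex) :
    secondSmallestEig (Γ.Leps ε) ≤ ⨆ x : Fin n, (Γ.dplus x - ε * Γ.dminus x) := by
  obtain ⟨x, y, hxy, hnadj⟩ := hnoncomplete
  set v : Fin n → ℝ := Pi.single x 1 - Pi.single y 1
  have hone_v : 1 ⬝ᵥ v = 0 := by simp [v]
  have hvv : v ⬝ᵥ v = 2 := by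
    norm_num [v, dotProduct_sub, hxy, hxy.symm]
  have hvLv : v ⬝ᵥ (Γ.Leps ε *ᵥ v)
      = (Γ.dplus x - ε * Γ.dminus x) + (Γ.dplus y - ε * Γ.dminus y) := by
    rw [single_sub_single_dotProduct_mulVec, Γ.Leps_apply_of_not_adj ε hxy hnadj,
      Γ.Leps_apply_of_not_adj ε hxy.symm (fun h => hnadj h.symm), Γ.Leps_apply_self,
      Γ.Leps_apply_self]
    ring
  have hpsd := Γ.posSemidef_Leps_of_lt_consensusIndex hε
  have hμ := secondSmallestEig_mul_le_of_mulVec_eq_zero hpsd.isHermitian (Γ.Leps_mulVec_one ε)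
    (Function.ne_iff.2 ⟨x, one_ne_zero⟩) hone_v (by simpa using hpsd.dotProduct_mulVec_nonneg v)
  have hbdd := (Set.finite_range fun x => Γ.dplus x - ε * Γ.dminus x).bddAbove
  rw [hvv, hvLv] at hμ
  linarith [le_ciSup hbdd x, le_ciSup hbdd y]

/-- upper bound for λ₂ of the ε-repelling Laplacian on a
non-complete positive-connected signed graph. -/
theorem stmt0 {n : ℕ} (Γ : SignedGraph n) (hpc : Γ.PosConnected)
    (hnoncomplete : ∃ x y : Fin n, x ≠ y ∧ ¬ Γ.underlying.Adj x y)
    (ε : ℝ) (hε : ε < Γ.consensusIndex) :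
    secondSmallestEig (Γ.Leps ε) ≤ ⨆ x : Fin n, (Γ.dplus x - ε * Γ.dminus x) :=
  stmt0_general Γ hnoncomplete ε hε
end

section
/- Let (G,σ,w) be a positive-connected signed graph with consensus index ε₀ satisfying the "no negative cycle" assumption that no two distinct edges of E₋ are contained in a common cycle of G. Then for every edge (i,j) ∈ E₋, ε₀ ≤ 1/(w_ij · r_ij), where r_ij is the effective resistance between i and j in the positive subgraph (V, E₊, w⁺). -/
open Matrix BigOperators

open scoped Classical

/-!
Let `x = L₊† (e_i - e_j)`. As the positive subgraph is connected, `ker L₊` consists of the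
constants, so `e_i - e_j` lies in the range of `L₊` and `L₊ x = e_i - e_j`. Hence
`xᵀ L₊ x = x_i - x_j = r_ij > 0`. For every admissible `ε`, positive semidefiniteness of `L_ε`
at `x` gives `ε xᵀ L₋ x ≤ r_ij`, while `xᵀ L₋ x ≥ w_ij (x_i - x_j)² = w_ij r_ij²`;
so `ε w_ij r_ij ≤ 1`.
-/

/-- `B = f(A)` for `f x = x⁻¹` (so `f 0 = 0`): the Penrose equations hold for `f` pointwise on
the spectrum, and every function is continuous on the finite spectrum of a matrix. -/
theorem Matrix.IsHermitian.exists_penrose {m : Type*} [Fintype m] [DecidableEq m]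
    {A : Matrix m m ℝ} (hA : A.IsHermitian) :
    ∃ B : Matrix m m ℝ,
      A * B * A = A ∧ B * A * B = B ∧ (A * B)ᵀ = A * B ∧ (B * A)ᵀ = B * A := by
  have hA' : IsSelfAdjoint A := hA
  have hcont (f : ℝ → ℝ) : ContinuousOn f (spectrum ℝ A) := A.finite_spectrum.continuousOn f
  have hmul (f g : ℝ → ℝ) : cfc f A * cfc g A = cfc (fun x => f x * g x) A :=
    (cfc_mul f g A (hcont f) (hcont g)).symm
  have hsymm (f : ℝ → ℝ) : (cfc f A)ᵀ = cfc f A := by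
    rw [← conjTranspose_eq_transpose_of_trivial]
    exact (cfc_predicate f A).star_eq
  have hid : cfc (fun x : ℝ => x) A = A := cfc_id' ℝ A
  have hL (g : ℝ → ℝ) : A * cfc g A = cfc (fun x => x * g x) A := by rw [← hmul, hid]
  have hR (f : ℝ → ℝ) : cfc f A * A = cfc (fun x => f x * x) A := by rw [← hmul, hid]
  refine ⟨cfc (fun x : ℝ => x⁻¹) A, ?_, ?_, ?_, ?_⟩
  · rw [hL, hR]
    simp only [mul_inv_mul_cancel, hid]
  · rw [hR, hmul]
    congr! 2 with x
    simpa using mul_inv_mul_cancel x⁻¹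
  · rw [hL, hsymm]
  · rw [hR, hsymm]

theorem Matrix.IsHermitian.penrose_pinv {n : ℕ} {A : Matrix (Fin n) (Fin n) ℝ}
    (hA : A.IsHermitian) :
    A * pinv A * A = A ∧ pinv A * A * pinv A = pinv A ∧
      (A * pinv A)ᵀ = A * pinv A ∧ (pinv A * A)ᵀ = pinv A * A := by
  rw [pinv, dif_pos hA.exists_penrose]
  exact hA.exists_penrose.choose_spec

theorem mulVec_mulVec_eq_self_of_sum_eq_zero {ι : Type*} [Fintype ι] {A B : Matrix ι ι ℝ}
    (hA : Aᵀ = A) (hABA : A * B * A = A) (hAB : (A * B)ᵀ = A * B)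
    (hker : ∀ y, A *ᵥ y = 0 → ∀ k l, y k = y l) (hone : A *ᵥ 1 = 0)
    {u : ι → ℝ} (hu : ∑ k, u k = 0) : A *ᵥ (B *ᵥ u) = u := by
  have hAAB : A * A * B = A := by
    simpa only [transpose_mul, hA, hAB, ← Matrix.mul_assoc] using congrArg transpose hABA
  set v := u - A *ᵥ (B *ᵥ u) with hv
  have hAv : A *ᵥ v = 0 := by
    rw [hv, mulVec_sub, mulVec_mulVec, mulVec_mulVec, hAAB, sub_self]
  have hsum : ∑ k, v k = 0 := by
    have hrange : ∑ k, (A *ᵥ (B *ᵥ u)) k = 0 := by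
      rw [← one_dotProduct, dotProduct_mulVec, ← mulVec_transpose, hA, hone, zero_dotProduct]
    simp only [hv, Pi.sub_apply, Finset.sum_sub_distrib, hu, hrange, sub_zero]
  have hconst := hker v hAv
  suffices v = 0 by rwa [hv, sub_eq_zero, eq_comm] at this
  funext k
  have hcard : Fintype.card ι • v k = 0 := by
    rw [← hsum, Finset.sum_congr rfl fun l _ => hconst l k, Finset.sum_const, Finset.card_univ]
  exact (smul_eq_zero.mp hcard).resolve_left (Fintype.card_pos_iff.mpr ⟨k⟩).ne'

section Laplacian

variable {ι : Type*} [Fintype ι] [DecidableEq ι]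

/-- Chosen so that `SignedGraph.Lplus` and `SignedGraph.Lminus` are `lap wplus` and `lap wminus`
by definition. -/
noncomputable def lap (w : ι → ι → ℝ) : Matrix ι ι ℝ :=
  Matrix.of fun i j => if i = j then ∑ l, w i l else -w i j

variable {w : ι → ι → ℝ}

theorem lap_mulVec_apply (hdiag : ∀ i, w i i = 0) (y : ι → ℝ) (k : ι) :
    (lap w *ᵥ y) k = ∑ l, w k l * (y k - y l) := by
  have hterm (l : ι) :
      lap w k l * y l = (if l = k then (∑ m, w k m) * y k else 0) - w k l * y l := by
    rcases eq_or_ne k l with rfl | h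
    · simp [lap, hdiag k]
    · simp [lap, h, Ne.symm h]
  simp only [mulVec, dotProduct, hterm, Finset.sum_sub_distrib, Finset.sum_ite_eq',
    Finset.mem_univ, if_true, Finset.sum_mul, mul_sub]

theorem lap_mulVec_one (hdiag : ∀ i, w i i = 0) : lap w *ᵥ 1 = 0 := by
  funext k
  simp [lap_mulVec_apply hdiag]

theorem lap_transpose (hsymm : ∀ i j, w i j = w j i) : (lap w)ᵀ = lap w := by
  ext i j
  rcases eq_or_ne i j with rfl | h
  · rfl
  · simp [lap, h, Ne.symm h, hsymm i j]

theorem two_mul_dotProduct_lap_mulVec (hsymm : ∀ i j, w i j = w j i) (hdiag : ∀ i, w i i = 0)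
    (y : ι → ℝ) : 2 * (y ⬝ᵥ lap w *ᵥ y) = ∑ k, ∑ l, w k l * (y k - y l) ^ 2 := by
  have hrow : y ⬝ᵥ lap w *ᵥ y = ∑ k, ∑ l, w k l * (y k * (y k - y l)) := by
    simp only [dotProduct, lap_mulVec_apply hdiag, Finset.mul_sum]
    exact Finset.sum_congr rfl fun k _ => Finset.sum_congr rfl fun l _ => by ring
  have hcol : y ⬝ᵥ lap w *ᵥ y = ∑ k, ∑ l, w k l * (y l * (y l - y k)) := by
    rw [hrow, Finset.sum_comm]
    exact Finset.sum_congr rfl fun k _ => Finset.sum_congr rfl fun l _ => by rw [hsymm]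
  rw [two_mul]
  nth_rw 1 [hrow]
  rw [hcol, ← Finset.sum_add_distrib]
  exact Finset.sum_congr rfl fun k _ => by
    rw [← Finset.sum_add_distrib]
    exact Finset.sum_congr rfl fun l _ => by ring

variable (hsymm : ∀ i j, w i j = w j i) (hdiag : ∀ i, w i i = 0) (hnn : ∀ i j, 0 ≤ w i j)
include hsymm hdiag hnn

theorem posSemidef_lap : (lap w).PosSemidef := by
  refine .of_dotProduct_mulVec_nonneg ?_ fun y => ?_
  · rw [IsHermitian, conjTranspose_eq_transpose_of_trivial, lap_transpose hsymm]
  · have h := two_mul_dotProduct_lap_mulVec hsymm hdiag y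
    have : 0 ≤ ∑ k, ∑ l, w k l * (y k - y l) ^ 2 :=
      Finset.sum_nonneg fun k _ => Finset.sum_nonneg fun l _ => mul_nonneg (hnn k l) (sq_nonneg _)
    simp only [star_trivial]
    linarith

theorem mul_sq_sub_le_dotProduct_lap_mulVec (y : ι → ℝ) {i j : ι} (hij : i ≠ j) :
    w i j * (y i - y j) ^ 2 ≤ y ⬝ᵥ lap w *ᵥ y := by
  have hnn' (k l : ι) : 0 ≤ w k l * (y k - y l) ^ 2 := mul_nonneg (hnn k l) (sq_nonneg _)
  have hrows : ∑ k ∈ {i, j}, ∑ l, w k l * (y k - y l) ^ 2 ≤ ∑ k, ∑ l, w k l * (y k - y l) ^ 2 :=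
    Finset.sum_le_sum_of_subset_of_nonneg (Finset.subset_univ _)
      fun k _ _ => Finset.sum_nonneg fun l _ => hnn' k l
  rw [Finset.sum_pair hij] at hrows
  have hi := Finset.single_le_sum (fun l _ => hnn' i l) (Finset.mem_univ j)
  have hj := Finset.single_le_sum (fun l _ => hnn' j l) (Finset.mem_univ i)
  have h2 := two_mul_dotProduct_lap_mulVec hsymm hdiag y
  rw [hsymm j i] at hj
  nlinarith

theorem eq_of_lap_mulVec_eq_zero (hconn : (SimpleGraph.fromRel fun i j => 0 < w i j).Connected)
    {y : ι → ℝ} (hy : lap w *ᵥ y = 0) (k l : ι) : y k = y l := by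
  have hadj {a b : ι} (hab : (SimpleGraph.fromRel fun i j => 0 < w i j).Adj a b) :
      y a = y b := by
    obtain ⟨hne, hw⟩ := hab
    have hw : 0 < w a b := hw.elim id fun h => hsymm a b ▸ h
    have h := mul_sq_sub_le_dotProduct_lap_mulVec hsymm hdiag hnn y hne
    rw [hy, dotProduct_zero] at h
    have : (y a - y b) ^ 2 = 0 := le_antisymm (nonpos_of_mul_nonpos_right h hw) (sq_nonneg _)
    exact sub_eq_zero.mp (pow_eq_zero_iff two_ne_zero |>.mp this)
  obtain ⟨p⟩ := hconn.preconnected k l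
  induction p with
  | nil => rfl
  | cons hab _ ih => exact (hadj hab).trans ih

end Laplacian

section PseudoinverseLaplacian

variable {n : ℕ} {w : Fin n → Fin n → ℝ} (hsymm : ∀ i j, w i j = w j i)
  (hdiag : ∀ i, w i i = 0) (hnn : ∀ i j, 0 ≤ w i j)
  (hconn : (SimpleGraph.fromRel fun i j => 0 < w i j).Connected)
include hsymm hdiag hnn hconn

theorem lap_mulVec_pinv_mulVec {u : Fin n → ℝ} (hu : ∑ k, u k = 0) :
    lap w *ᵥ (pinv (lap w) *ᵥ u) = u := by
  obtain ⟨hABA, -, hAB, -⟩ := (posSemidef_lap hsymm hdiag hnn).isHermitian.penrose_pinv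
  exact mulVec_mulVec_eq_self_of_sum_eq_zero (lap_transpose hsymm) hABA hAB
    (fun _ hy => eq_of_lap_mulVec_eq_zero hsymm hdiag hnn hconn hy) (lap_mulVec_one hdiag) hu

theorem dotProduct_pinv_lap_mulVec_pos {u : Fin n → ℝ} (hu0 : u ≠ 0) (hu : ∑ k, u k = 0) :
    0 < u ⬝ᵥ pinv (lap w) *ᵥ u := by
  have hpsd := posSemidef_lap hsymm hdiag hnn
  set x := pinv (lap w) *ᵥ u
  have hx : lap w *ᵥ x = u := lap_mulVec_pinv_mulVec hsymm hdiag hnn hconn hu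
  have hquad : star x ⬝ᵥ lap w *ᵥ x = u ⬝ᵥ x := by rw [star_trivial, hx, dotProduct_comm]
  rw [← hquad]
  refine (hpsd.dotProduct_mulVec_nonneg x).lt_of_ne fun h => hu0 ?_
  rw [← hx]
  exact (hpsd.dotProduct_mulVec_zero_iff x).mp h.symm

end PseudoinverseLaplacian

theorem SignedGraph.mul_dotProduct_Lminus_le {n : ℕ} (Γ : SignedGraph n) {ε : ℝ}
    (hpsd : (Γ.Leps ε).PosSemidef) (x : Fin n → ℝ) :
    ε * (x ⬝ᵥ Γ.Lminus *ᵥ x) ≤ x ⬝ᵥ Γ.Lplus *ᵥ x := by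
  have h := hpsd.dotProduct_mulVec_nonneg x
  rw [star_trivial, SignedGraph.Leps, sub_mulVec, dotProduct_sub, smul_mulVec, dotProduct_smul,
    smul_eq_mul] at h
  linarith

theorem stmt8_general {n : ℕ} (Γ : SignedGraph n) (hpc : Γ.PosConnected) :
    ∀ i j : Fin n, 0 < Γ.wminus i j →
      Γ.consensusIndex ≤ 1 / (Γ.wminus i j *
        ((Pi.single i 1 - Pi.single j 1) ⬝ᵥ
          (pinv Γ.Lplus) *ᵥ (Pi.single i 1 - Pi.single j 1))) := by
  intro i j hij
  have hne : i ≠ j := by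
    rintro rfl
    simp [Γ.wminus_diag] at hij
  set u : Fin n → ℝ := Pi.single i 1 - Pi.single j 1
  have hu : ∑ k, u k = 0 := by simp [u, Finset.sum_sub_distrib]
  have hu0 : u ≠ 0 := fun h => by simpa [u, hne] using congrFun h i
  set x := pinv Γ.Lplus *ᵥ u
  have hx : Γ.Lplus *ᵥ x = u :=
    lap_mulVec_pinv_mulVec Γ.wplus_symm Γ.wplus_diag Γ.wplus_nonneg hpc hu
  have hr : 0 < u ⬝ᵥ x :=
    dotProduct_pinv_lap_mulVec_pos Γ.wplus_symm Γ.wplus_diag Γ.wplus_nonneg hpc hu0 hu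
  have hdiff : x i - x j = u ⬝ᵥ x := by simp [u, sub_dotProduct, single_dotProduct]
  refine Real.sSup_le (fun ε ⟨hε, hpsd, _⟩ => ?_) (by positivity)
  have hneg : Γ.wminus i j * (x i - x j) ^ 2 ≤ x ⬝ᵥ Γ.Lminus *ᵥ x :=
    mul_sq_sub_le_dotProduct_lap_mulVec Γ.wminus_symm Γ.wminus_diag Γ.wminus_nonneg x hne
  have hpos := Γ.mul_dotProduct_Lminus_le hpsd x
  rw [hx, dotProduct_comm x u] at hpos
  rw [hdiff] at hneg
  rw [le_div_iff₀ (by positivity)]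
  nlinarith [mul_le_mul_of_nonneg_left hneg hε.le]

/-- under the "no negative cycle" assumption, the consensus index
is at most `1/(w_ij r_ij)` for every negative edge `(i,j)`, where `r_ij` is the
effective resistance in the positive subgraph. -/
theorem stmt8 {n : ℕ} (Γ : SignedGraph n) (hpc : Γ.PosConnected)
    (hnnc : ∀ (v : Fin n) (c : Γ.underlying.Walk v v), c.IsCycle →
      ∀ i j k l : Fin n, s(i, j) ∈ c.edges → s(k, l) ∈ c.edges →
        0 < Γ.wminus i j → 0 < Γ.wminus k l → s(i, j) = s(k, l)) :
    ∀ i j : Fin n, 0 < Γ.wminus i j →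
      Γ.consensusIndex ≤ 1 / (Γ.wminus i j *
        ((Pi.single i 1 - Pi.single j 1) ⬝ᵥ
          (pinv Γ.Lplus) *ᵥ (Pi.single i 1 - Pi.single j 1))) :=
  stmt8_general Γ hpc
end
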